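/- The graphs NM-hat and NO⁺(6,2)-hat are isomorphic: there exists a graph isomorphism between the graph on nonsingular symmetric 3×3 matrices over GF(2) with A ~ B iff A ≠ B and A+B has zero diagonal, and the graph on {v ∈ GF(2)⁶ : Q(v) = 1} (Q(x) = x₁x₆ + x₂x₅ + x₃x₄) with u ~ v iff u ≠ v and u+v ∈ N = {w : w₁ = w₂ = w₃ = 0}. -/

import Mathlib

open scoped Classical

/-- The graph `NM-hat`: vertices are the symmetric `3 × 3` matrices over `GF(2)` with
nonzero determinant; two distinct vertices `A, B` are adjacent iff `A + B` has zero
diagonal. -/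
noncomputable def NMhat :
    SimpleGraph {M : Matrix (Fin 3) (Fin 3) (ZMod 2) // M.IsSymm ∧ M.det ≠ 0} where
  Adj A B := A ≠ B ∧ (A.1 + B.1) 0 0 = 0 ∧ (A.1 + B.1) 1 1 = 0 ∧ (A.1 + B.1) 2 2 = 0
  symm := ⟨fun A B h => ⟨h.1.symm, by rw [add_comm]; exact h.2⟩⟩
  loopless := ⟨fun A h => h.1 rfl⟩

/-- The hyperbolic quadratic form `Q(x) = x₁x₆ + x₂x₅ + x₃x₄` on `GF(2)⁶`. -/
def quadQ (x : Fin 6 → ZMod 2) : ZMod 2 :=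
  x 0 * x 5 + x 1 * x 4 + x 2 * x 3

/-- The graph `NO⁺(6,2)-hat`: vertices are the vectors `v ∈ GF(2)⁶` with `Q(v) = 1`;
two distinct vertices `u, v` are adjacent iff `u + v` lies in the plane
`N : x₁ = x₂ = x₃ = 0`. -/
noncomputable def NO6hat : SimpleGraph {v : Fin 6 → ZMod 2 // quadQ v = 1} where
  Adj u v := u ≠ v ∧ (u.1 + v.1) 0 = 0 ∧ (u.1 + v.1) 1 = 0 ∧ (u.1 + v.1) 2 = 0
  symm := ⟨fun u v h => ⟨h.1.symm, by rw [add_comm]; exact h.2⟩⟩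
  loopless := ⟨fun u h => h.1 rfl⟩

/-!
Over `GF(2)` the determinant of the symmetric matrix with diagonal `a, b, c` and
off-diagonal entries `p = m₁₂, q = m₁₃, r = m₂₃` is `abc + ar + bq + cp`, because `2pqr = 0`
and `x² = x`. Replacing `r` by `r + bc` absorbs the cubic term and turns the determinant
into the hyperbolic form `Q(a, b, c, p, q, r + bc)`. This coordinate change is a bijection
between symmetric matrices and `GF(2)⁶` that keeps the diagonal as the first three
coordinates, so it carries nonsingular matrices to `Q = 1` and zero-diagonal sums to
sums in `N`.
-/

namespace NMhat

lemma det_symm_fin_three (a b c p q r : ZMod 2) :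
    !![a, p, q; p, b, r; q, r, c].det = a * b * c + a * r + b * q + c * p := by
  simp only [Matrix.det_fin_three, Matrix.of_apply, Matrix.cons_val', Matrix.cons_val_zero,
    Matrix.cons_val_fin_one, Matrix.cons_val_one, Matrix.cons_val]
  revert a b c p q r
  decide

lemma eq_of_isSymm_fin_three {α : Type*} {M : Matrix (Fin 3) (Fin 3) α} (h : M.IsSymm) :
    M = !![M 0 0, M 0 1, M 0 2; M 0 1, M 1 1, M 1 2; M 0 2, M 1 2, M 2 2] := by
  conv_lhs => rw [Matrix.eta_fin_three M]
  rw [h.apply 0 1, h.apply 0 2, h.apply 1 2]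

def symmToVec (M : Matrix (Fin 3) (Fin 3) (ZMod 2)) : Fin 6 → ZMod 2 :=
  ![M 0 0, M 1 1, M 2 2, M 0 1, M 0 2, M 1 2 + M 1 1 * M 2 2]

def vecToSymm (v : Fin 6 → ZMod 2) : Matrix (Fin 3) (Fin 3) (ZMod 2) :=
  !![v 0, v 3, v 4; v 3, v 1, v 5 + v 1 * v 2; v 4, v 5 + v 1 * v 2, v 2]

lemma isSymm_vecToSymm (v : Fin 6 → ZMod 2) : (vecToSymm v).IsSymm := by
  ext i j
  fin_cases i <;> fin_cases j <;> rfl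

lemma quadQ_symmToVec {M : Matrix (Fin 3) (Fin 3) (ZMod 2)} (h : M.IsSymm) :
    quadQ (symmToVec M) = M.det := by
  rw [eq_of_isSymm_fin_three h, det_symm_fin_three]
  simp only [quadQ, symmToVec, Matrix.of_apply, Matrix.cons_val', Matrix.cons_val_zero,
    Matrix.cons_val_fin_one, Matrix.cons_val_one, Matrix.cons_val]
  ring

lemma det_vecToSymm (v : Fin 6 → ZMod 2) : (vecToSymm v).det = quadQ v := by
  rw [vecToSymm, det_symm_fin_three, quadQ]
  linear_combination v 0 * v 1 * v 2 * (CharTwo.two_eq_zero (R := ZMod 2))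

lemma vecToSymm_symmToVec {M : Matrix (Fin 3) (Fin 3) (ZMod 2)} (h : M.IsSymm) :
    vecToSymm (symmToVec M) = M := by
  conv_rhs => rw [eq_of_isSymm_fin_three h]
  simp [vecToSymm, symmToVec, add_assoc, CharTwo.add_self_eq_zero]

lemma symmToVec_vecToSymm (v : Fin 6 → ZMod 2) : symmToVec (vecToSymm v) = v := by
  ext i
  fin_cases i <;> simp [symmToVec, vecToSymm, add_assoc, CharTwo.add_self_eq_zero]

def vertexEquiv :
    {M : Matrix (Fin 3) (Fin 3) (ZMod 2) // M.IsSymm ∧ M.det ≠ 0} ≃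
      {v : Fin 6 → ZMod 2 // quadQ v = 1} where
  toFun A := ⟨symmToVec A, by rw [quadQ_symmToVec A.2.1]; exact Fin.eq_one_of_ne_zero _ A.2.2⟩
  invFun v := ⟨vecToSymm v, isSymm_vecToSymm v, by rw [det_vecToSymm, v.2]; exact one_ne_zero⟩
  left_inv A := Subtype.ext (vecToSymm_symmToVec A.2.1)
  right_inv v := Subtype.ext (symmToVec_vecToSymm v)

end NMhat

/-- The graphs `NM-hat` and `NO⁺(6,2)-hat` are isomorphic. -/
theorem NMhat_iso_NO6hat : Nonempty (NMhat ≃g NO6hat) :=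
  ⟨{ toEquiv := NMhat.vertexEquiv
     map_rel_iff' := fun {A B} => by
       simp only [NMhat, NO6hat, NMhat.vertexEquiv.injective.ne_iff]
       rfl }⟩
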